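/- Every module endomorphism f of V_α satisfies f(Ŝ_α) = c·Ŝ_α for some scalar c; consequently the endomorphism ring of V_α is isomorphic to the ground field. -/

import Mathlib

/-- The 0-Hecke operator `π_{i+1}` on words `w : Fin n → ℕ`. -/
def heckeWord {n : ℕ} (i : Fin (n - 1)) (w : Fin n → ℕ) : Fin n → ℕ :=
  let p : Fin n := ⟨i, by have := i.isLt; omega⟩
  let q : Fin n := ⟨(i : ℕ) + 1, by have := i.isLt; omega⟩
  if w p < w q then w ∘ Equiv.swap p q else w

/-- A word is a `𝒴`-word if every occurrence of a letter `c+2` is preceded by an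
occurrence of `c+1`. -/
def IsYWordF {n : ℕ} (w : Fin n → ℕ) : Prop :=
  ∀ (p : Fin n) (c : ℕ), w p = c + 2 → ∃ q, q < p ∧ w q = c + 1

/-- A word has content `α`. -/
def WordHasContent {n : ℕ} (c : Composition n) (w : Fin n → ℕ) : Prop :=
  (∀ p, 1 ≤ w p ∧ w p ≤ c.length) ∧
  ∀ j : Fin c.length,
    (Finset.univ.filter fun p => w p = (j : ℕ) + 1).card = c.blocksFun j

/-- The quotient module `V_α = M_α / N_α`, realized with basis the `𝒴`-words of
content `α`. -/
abbrev Vmod (n : ℕ) (c : Composition n) :=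
  {w : Fin n → ℕ // WordHasContent c w ∧ IsYWordF w} →₀ ℚ

open Classical in
/-- The action of the 0-Hecke generator `π_{i+1}` on `V_α`: a basis `𝒴`-word is sent
to its image under `heckeWord` if that image is again a `𝒴`-word, and to `0`
otherwise (i.e. modulo the span `N_α` of non-`𝒴`-words). -/
noncomputable def heckeOp (n : ℕ) (c : Composition n) (i : Fin (n - 1)) :
    Vmod n c →ₗ[ℚ] Vmod n c :=
  Finsupp.lsum ℚ fun w =>
    LinearMap.toSpanSingleton ℚ (Vmod n c)
      (if h : WordHasContent c (heckeWord i w.val) ∧ IsYWordF (heckeWord i w.val)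
        then Finsupp.single (⟨heckeWord i w.val, h⟩ :
          {w : Fin n → ℕ // WordHasContent c w ∧ IsYWordF w}) (1 : ℚ)
        else 0)


/-- The sorted word `1^{α₁} 2^{α₂} ⋯ m^{α_m}`, i.e. the `𝒴`-word corresponding to the
super-standard tableau `Ŝ_α`. -/
def sortedWord {n : ℕ} (c : Composition n) : Fin n → ℕ :=
  fun p => (c.index p : ℕ) + 1

/-
The vector `f(Ŝ_α)` is fixed by every `π_i` for which `i, i+1` lie in the same row of
`Ŝ_α`, because `Ŝ_α` is. A basis word with an ascent at positions `i, i+1` never occurs in the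
image of `π_i`, and the sorted word is the only `𝒴`-word of content `α` without an ascent inside
a row; hence `f(Ŝ_α) = r Ŝ_α`. Any other `𝒴`-word `w` has an adjacent descent, and undoing it
gives a `𝒴`-word `u` with fewer inversions and `π_i u = w`, so `f w = π_i (f u) = r w` by
induction on the number of inversions.
-/

open Finset Finsupp Equiv

theorem Composition.index_mono {n : ℕ} (c : Composition n) : Monotone c.index := by
  intro p q hpq
  by_contra! hlt
  have h1 := c.lt_sizeUpTo_index_succ q
  have h2 : c.sizeUpTo ((c.index q : ℕ) + 1) ≤ c.sizeUpTo (c.index p) :=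
    c.monotone_sizeUpTo hlt
  have h3 := c.sizeUpTo_index_le p
  have h4 : (p : ℕ) ≤ q := hpq
  rw [Fin.val_succ] at h1
  omega

theorem Fin.monotone_of_le_succ {α : Type*} [Preorder α] {n : ℕ} {w : Fin n → α}
    (h : ∀ p q : Fin n, (q : ℕ) = p + 1 → w p ≤ w q) : Monotone w := by
  cases n with
  | zero => exact fun p => p.elim0
  | succ m => exact Fin.monotone_iff_le_succ.2 fun i => h _ _ (by simp)

theorem Fin.swap_apply_lt_swap_apply {n : ℕ} {p q a b : Fin n} (hpq : (q : ℕ) = p + 1)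
    (hab : a < b) (hne : (a, b) ≠ (p, q)) : swap p q a < swap p q b := by
  simp only [ne_eq, Prod.mk.injEq, not_and] at hne
  simp only [swap_apply_def, Fin.lt_def, Fin.ext_iff] at hab hne ⊢
  split_ifs <;> omega

section Words

variable {n : ℕ} {c : Composition n} {w : Fin n → ℕ}

theorem WordHasContent.comp_perm (hw : WordHasContent c w) (σ : Perm (Fin n)) :
    WordHasContent c (w ∘ σ) := by
  refine ⟨fun p => hw.1 (σ p), fun j => ?_⟩
  rw [← hw.2 j]
  exact Finset.card_equiv σ (by simp)

theorem IsYWordF.comp_swap (hy : IsYWordF w) {p q : Fin n} (hpq : (q : ℕ) = p + 1)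
    (hd : w q < w p) : IsYWordF (w ∘ swap p q) := by
  intro r d hr
  obtain ⟨t, htr, ht⟩ := hy (swap p q r) d hr
  have hne : (t, swap p q r) ≠ (p, q) := by
    intro h
    obtain ⟨rfl, hrq⟩ := Prod.mk.inj h
    rw [Function.comp_apply, hrq] at hr
    omega
  refine ⟨swap p q t, ?_, by simpa using ht⟩
  simpa using Fin.swap_apply_lt_swap_apply hpq htr hne

theorem sortedWord_le_of_eqOn_lt (hs : WordHasContent c (sortedWord c))
    (hw : WordHasContent c w) {p : Fin n} (hp : ∀ q < p, w q = sortedWord c q) :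
    sortedWord c p ≤ w p := by
  by_contra! hlt
  have hpos := (hw.1 p).1
  simp only [sortedWord] at hlt
  set j : Fin c.length := ⟨w p - 1, by have := (c.index p).isLt; omega⟩
  -- the positions of row `j` all precede `p`, where `w` agrees with the sorted word
  have hsub : insert p (univ.filter fun q => sortedWord c q = (j : ℕ) + 1) ⊆
      univ.filter fun q => w q = (j : ℕ) + 1 := by
    intro q hq
    simp only [Finset.mem_insert, mem_filter, mem_univ, true_and] at hq ⊢
    simp only [sortedWord, j] at hq ⊢
    rcases hq with rfl | hq
    · omega
    · have hqp : q < p := c.index_mono.reflect_lt (by rw [Fin.lt_def]; omega)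
      rw [hp q hqp, sortedWord, hq]
  have hcard := Finset.card_le_card hsub
  rw [Finset.card_insert_of_notMem (by simp [sortedWord, j]; omega), hs.2 j, hw.2 j] at hcard
  omega

theorem le_sortedWord_of_isYWordF (hy : IsYWordF w)
    (hrow : ∀ p q : Fin n, (q : ℕ) = p + 1 → c.index p = c.index q → w q ≤ w p)
    {p : Fin n} (hp : ∀ q < p, w q = sortedWord c q) : w p ≤ sortedWord c p := by
  by_contra! hlt
  simp only [sortedWord] at hlt
  obtain ⟨t, htp, ht⟩ := hy p (w p - 2) (by omega)
  have ht' := hp t htp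
  simp only [sortedWord] at ht'
  have htp' : (t : ℕ) < p := htp
  -- the letter `w p - 1` occurs at `t`, in the row of `p`; so `w` ascends from `p - 1` to `p`
  set p' : Fin n := ⟨p - 1, by omega⟩
  have h1 : c.index t ≤ c.index p' := c.index_mono (by rw [Fin.le_def]; simp [p']; omega)
  have h2 : c.index p' ≤ c.index p := c.index_mono (by rw [Fin.le_def]; simp [p'])
  have h3 := hp p' (by rw [Fin.lt_def]; simp [p']; omega)
  have h4 := hrow p' p (by simp [p']; omega)
  simp only [sortedWord, Fin.le_def, Fin.ext_iff] at h1 h2 h3 h4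
  omega

theorem le_sortedWord_of_monotone (hs : WordHasContent c (sortedWord c))
    (hw : WordHasContent c w) (hmono : Monotone w) {p : Fin n}
    (hp : ∀ q < p, w q = sortedWord c q) : w p ≤ sortedWord c p := by
  by_contra! hlt
  -- the letter of the row of `p` can only occur before `p`, where `w` agrees with the sorted word
  have hsub : (univ.filter fun q => w q = (c.index p : ℕ) + 1) ⊆
      (univ.filter fun q => sortedWord c q = (c.index p : ℕ) + 1).erase p := by
    intro q hq
    simp only [mem_filter, mem_univ, true_and] at hq
    have hqp : q < p := lt_of_not_ge fun hpq => by
      have := hmono hpq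
      simp only [sortedWord] at hlt
      omega
    simp [← hp q hqp, hq, hqp.ne]
  have hcard := Finset.card_le_card hsub
  rw [hw.2, Finset.card_erase_of_mem (by simp [sortedWord]), hs.2] at hcard
  have := c.one_le_blocksFun (c.index p)
  omega

theorem eq_sortedWord_of_forall_eqOn_lt
    (h : ∀ p, (∀ q < p, w q = sortedWord c q) → w p = sortedWord c p) : w = sortedWord c := by
  funext p
  induction p using WellFoundedLT.induction with
  | ind p ih => exact h p ih

theorem eq_sortedWord_of_isYWordF (hs : WordHasContent c (sortedWord c))
    (hw : WordHasContent c w) (hy : IsYWordF w)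
    (hrow : ∀ p q : Fin n, (q : ℕ) = p + 1 → c.index p = c.index q → w q ≤ w p) :
    w = sortedWord c :=
  eq_sortedWord_of_forall_eqOn_lt fun _ hp =>
    (le_sortedWord_of_isYWordF hy hrow hp).antisymm (sortedWord_le_of_eqOn_lt hs hw hp)

theorem eq_sortedWord_of_monotone (hs : WordHasContent c (sortedWord c))
    (hw : WordHasContent c w) (hmono : Monotone w) : w = sortedWord c :=
  eq_sortedWord_of_forall_eqOn_lt fun _ hp =>
    (le_sortedWord_of_monotone hs hw hmono hp).antisymm (sortedWord_le_of_eqOn_lt hs hw hp)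

end Words

def inversions {α : Type*} [LinearOrder α] {n : ℕ} (w : Fin n → α) :
    Finset (Fin n × Fin n) :=
  univ.filter fun ab => ab.1 < ab.2 ∧ w ab.2 < w ab.1

theorem card_inversions_comp_swap_lt {α : Type*} [LinearOrder α] {n : ℕ} {w : Fin n → α}
    {p q : Fin n}
    (hpq : (q : ℕ) = p + 1) (hd : w q < w p) :
    #(inversions (w ∘ swap p q)) < #(inversions w) := by
  set σ := swap p q
  have hpq' : p < q := by rw [Fin.lt_def]; omega
  have hsub : (inversions (w ∘ σ)).map (σ.prodCongr σ).toEmbedding ⊂ inversions w := by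
    refine (Finset.ssubset_iff_of_subset ?_).2 ⟨(p, q), ?_, ?_⟩
    · intro x hx
      obtain ⟨⟨a, b⟩, hab, rfl⟩ := Finset.mem_map.1 hx
      simp only [inversions, mem_filter, mem_univ, true_and, Function.comp_apply] at hab
      have hne : (a, b) ≠ (p, q) := by
        intro h
        obtain ⟨rfl, rfl⟩ := Prod.mk.inj h
        simp only [σ, swap_apply_left, swap_apply_right] at hab
        exact lt_asymm hd hab.2
      simpa [inversions] using ⟨Fin.swap_apply_lt_swap_apply hpq hab.1 hne, hab.2⟩
    · simp [inversions, hpq', hd]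
    · simp [Finset.mem_map_equiv, inversions, σ, hpq'.not_gt]
  simpa using Finset.card_lt_card hsub

section Hecke

variable {n : ℕ}

def heckePosL (i : Fin (n - 1)) : Fin n := ⟨i, by omega⟩

def heckePosR (i : Fin (n - 1)) : Fin n := ⟨i + 1, by omega⟩

theorem exists_heckePos_eq {p q : Fin n} (hpq : (q : ℕ) = p + 1) :
    ∃ i : Fin (n - 1), heckePosL i = p ∧ heckePosR i = q :=
  ⟨⟨p, by omega⟩, rfl, Fin.ext hpq.symm⟩

theorem heckeWord_of_lt {i : Fin (n - 1)} {w : Fin n → ℕ}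
    (h : w (heckePosL i) < w (heckePosR i)) :
    heckeWord i w = w ∘ swap (heckePosL i) (heckePosR i) :=
  if_pos h

theorem heckeWord_of_not_lt {i : Fin (n - 1)} {w : Fin n → ℕ}
    (h : ¬ w (heckePosL i) < w (heckePosR i)) : heckeWord i w = w :=
  if_neg h

theorem heckeWord_posR_le_posL (i : Fin (n - 1)) (w : Fin n → ℕ) :
    heckeWord i w (heckePosR i) ≤ heckeWord i w (heckePosL i) := by
  by_cases h : w (heckePosL i) < w (heckePosR i)
  · simp [heckeWord_of_lt h, h.le]
  · rw [heckeWord_of_not_lt h]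
    omega

variable {c : Composition n}

abbrev YWord (n : ℕ) (c : Composition n) :=
  {w : Fin n → ℕ // WordHasContent c w ∧ IsYWordF w}

open Classical in
theorem heckeOp_single (i : Fin (n - 1)) (u : YWord n c) :
    heckeOp n c i (single u 1) =
      if h : WordHasContent c (heckeWord i u.val) ∧ IsYWordF (heckeWord i u.val)
      then single (⟨heckeWord i u.val, h⟩ : YWord n c) 1 else 0 := by
  rw [heckeOp, lsum_single, LinearMap.toSpanSingleton_apply, one_smul]

theorem heckeOp_single_of_heckeWord_eq {i : Fin (n - 1)} {u w : YWord n c}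
    (h : heckeWord i u.val = w.val) : heckeOp n c i (single u 1) = single w 1 := by
  rw [heckeOp_single, dif_pos (h ▸ w.2)]
  congr

theorem heckeOp_apply_eq_zero_of_lt {i : Fin (n - 1)} (x : Vmod n c) {w : YWord n c}
    (hw : w.val (heckePosL i) < w.val (heckePosR i)) : heckeOp n c i x w = 0 := by
  induction x using Finsupp.induction_linear with
  | zero => simp
  | add x y hx hy => simp [hx, hy]
  | single u b =>
    rw [← smul_single_one, map_smul, heckeOp_single]
    split_ifs with h
    · have hne : (⟨heckeWord i u.val, h⟩ : YWord n c) ≠ w := by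
        rintro rfl
        exact (heckeWord_posR_le_posL i u.val).not_gt hw
      simp [hne]
    · simp

end Hecke

section Endomorphisms

variable {n : ℕ} {c : Composition n}
  (hs : WordHasContent c (sortedWord c) ∧ IsYWordF (sortedWord c))

theorem heckeOp_single_sortedWord {i : Fin (n - 1)}
    (hi : c.index (heckePosL i) = c.index (heckePosR i)) :
    heckeOp n c i (single ⟨sortedWord c, hs⟩ 1) = single ⟨sortedWord c, hs⟩ 1 :=
  heckeOp_single_of_heckeWord_eq (heckeWord_of_not_lt (by simp [sortedWord, hi]))

theorem eq_single_sortedWord_of_heckeOp_eq_self {x : Vmod n c}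
    (hx : ∀ i, c.index (heckePosL i) = c.index (heckePosR i) → heckeOp n c i x = x) :
    x = single ⟨sortedWord c, hs⟩ (x ⟨sortedWord c, hs⟩) := by
  ext w
  by_cases hw : w = ⟨sortedWord c, hs⟩
  · simp [hw]
  obtain ⟨p, q, hpq, hpq_row, hasc⟩ : ∃ p q : Fin n, (q : ℕ) = p + 1 ∧
      c.index p = c.index q ∧ w.val p < w.val q := by
    by_contra! h
    exact hw (Subtype.ext (eq_sortedWord_of_isYWordF hs.1 w.2.1 w.2.2 h))
  obtain ⟨i, rfl, rfl⟩ := exists_heckePos_eq hpq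
  rw [single_apply, if_neg (Ne.symm hw), ← hx i hpq_row, heckeOp_apply_eq_zero_of_lt x hasc]

theorem eq_smul_id_of_commute_heckeOp {f : Vmod n c →ₗ[ℚ] Vmod n c}
    (hcomm : ∀ i : Fin (n - 1), f ∘ₗ heckeOp n c i = heckeOp n c i ∘ₗ f) {r : ℚ}
    (hr : f (single ⟨sortedWord c, hs⟩ 1) = r • single ⟨sortedWord c, hs⟩ 1) :
    f = r • LinearMap.id := by
  suffices key : ∀ w : YWord n c, f (single w 1) = r • single w 1 from
    lhom_ext' fun w => LinearMap.ext_ring (by simpa using key w)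
  intro w
  induction h : #(inversions w.val) using Nat.strong_induction_on generalizing w with
  | _ k ih =>
  by_cases hw : w.val = sortedWord c
  · obtain rfl : w = ⟨sortedWord c, hs⟩ := Subtype.ext hw
    exact hr
  obtain ⟨p, q, hpq, hdesc⟩ : ∃ p q : Fin n, (q : ℕ) = p + 1 ∧ w.val q < w.val p := by
    by_contra! h
    exact hw (eq_sortedWord_of_monotone hs.1 w.2.1 (Fin.monotone_of_le_succ h))
  obtain ⟨i, rfl, rfl⟩ := exists_heckePos_eq hpq
  let u : YWord n c := ⟨w.val ∘ swap _ _, w.2.1.comp_perm _, w.2.2.comp_swap hpq hdesc⟩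
  have hu : heckeOp n c i (single u 1) = single w 1 :=
    heckeOp_single_of_heckeWord_eq (by
      rw [heckeWord_of_lt (by simpa [u] using hdesc)]
      ext; simp [u])
  calc f (single w 1) = heckeOp n c i (f (single u 1)) := by
        rw [← hu, ← LinearMap.comp_apply, hcomm, LinearMap.comp_apply]
    _ = r • single w 1 := by
        rw [ih _ (h ▸ card_inversions_comp_swap_lt hpq hdesc) u rfl, map_smul, hu]

end Endomorphisms

/-- Every module endomorphism `f` of `V_α` (a linear endomorphism commuting with the
0-Hecke action) satisfies `f(Ŝ_α) = r • Ŝ_α` for some scalar `r`; consequently every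
endomorphism of `V_α` is the scalar `r`, i.e. the endomorphism ring of `V_α` is
isomorphic to the ground field. -/
theorem Vmod_endomorphisms_scalar (n : ℕ) (c : Composition n)
    (hs : WordHasContent c (sortedWord c) ∧ IsYWordF (sortedWord c))
    (f : Vmod n c →ₗ[ℚ] Vmod n c)
    (hcomm : ∀ i : Fin (n - 1), f ∘ₗ heckeOp n c i = heckeOp n c i ∘ₗ f) :
    ∃ r : ℚ,
      f (Finsupp.single ⟨sortedWord c, hs⟩ 1) =
        r • Finsupp.single ⟨sortedWord c, hs⟩ 1 ∧
      f = r • LinearMap.id := by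
  set S : YWord n c := ⟨sortedWord c, hs⟩
  have hfS : f (single S 1) = f (single S 1) S • single S 1 := by
    rw [smul_single_one]
    refine eq_single_sortedWord_of_heckeOp_eq_self hs fun i hi => ?_
    rw [← LinearMap.comp_apply, ← hcomm, LinearMap.comp_apply,
      heckeOp_single_sortedWord hs hi]
  exact ⟨_, hfS, eq_smul_id_of_commute_heckeOp hs hcomm hfS⟩
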